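/- arXiv:2305.05669 — 2 statements merged into one kernel-verified Lean document; each statement's English description precedes it below -/
import Mathlib

section
/- If Y is a T1 topological space and p ∈ Y is a κ-OK point for some infinite cardinal κ ≥ ω₁, then p is a weak P-point of Y, i.e., p is not in the closure of any countable subset of Y \ {p}. -/
/-- A sequence `(U n : n < ω)` of neighbourhoods of `p` is `κ`-OK iff there are
neighbourhoods `{V α : α < κ}` of `p` such that for all `n ≥ 1` and all
`α₁ < ... < α_n < κ`, `V α₁ ∩ ... ∩ V α_n ⊆ U n`. -/
def IsOKSeq {Y : Type*} [TopologicalSpace Y] (κ : Cardinal) (p : Y) (U : ℕ → Set Y) : Prop :=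
  ∃ V : Ordinal → Set Y, (∀ α < κ.ord, V α ∈ nhds p) ∧
    ∀ n : ℕ, 1 ≤ n → ∀ s : Fin n → Ordinal, StrictMono s → (∀ i, s i < κ.ord) →
      (⋂ i, V (s i)) ⊆ U n

/-- `p` is a `κ`-OK point iff every `ω`-sequence of neighbourhoods of `p` is `κ`-OK. -/
def IsOKPoint {Y : Type*} [TopologicalSpace Y] (κ : Cardinal) (p : Y) : Prop :=
  ∀ U : ℕ → Set Y, (∀ n, U n ∈ nhds p) → IsOKSeq κ p U

/-- `p` is a weak P-point iff `p` is not in the closure of any countable subset of `Y \ {p}`. -/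
def IsWeakPPoint {Y : Type*} [TopologicalSpace Y] (p : Y) : Prop :=
  ∀ D : Set Y, D.Countable → p ∉ D → p ∉ closure D

theorem stmt0 {Y : Type*} [TopologicalSpace Y] [T1Space Y] (p : Y) (κ : Cardinal)
    (hκ : Cardinal.aleph 1 ≤ κ) (h : IsOKPoint κ p) : IsWeakPPoint p := by
  intro D hD hpD
  rcases D.eq_empty_or_nonempty with rfl | hne
  · simp
  obtain ⟨f, rfl⟩ := hD.exists_eq_range hne
  set U : ℕ → Set Y := fun n => (f '' {k | k < n})ᶜ with hU
  have hUnhds : ∀ n, U n ∈ nhds p := by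
    intro n
    have hfin : (f '' {k | k < n}).Finite := (Set.finite_Iio n).image f
    have : p ∉ f '' {k | k < n} := by
      rintro ⟨k, -, rfl⟩
      exact hpD ⟨k, rfl⟩
    exact hfin.isClosed.isOpen_compl.mem_nhds this
  obtain ⟨V, hV1, hV2⟩ := h U hUnhds
  -- each f k is in V α for only finitely many α < κ.ord
  have hfin : ∀ k : ℕ, {α : Ordinal | α < κ.ord ∧ f k ∈ V α}.Finite := by
    intro k
    by_contra hinf
    obtain ⟨t, ht, htc⟩ := Set.Infinite.exists_subset_card_eq hinf (k + 1)
    have hs := hV2 (k + 1) (Nat.le_add_left 1 k) (t.orderEmbOfFin htc)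
      (t.orderEmbOfFin htc).strictMono
      (fun i => (ht (t.orderEmbOfFin_mem htc i)).1)
    have hmem : f k ∈ ⋂ i, V (t.orderEmbOfFin htc i) :=
      Set.mem_iInter.2 fun i => (ht (t.orderEmbOfFin_mem htc i)).2
    exact hs hmem ⟨k, Nat.lt_succ_self k, rfl⟩
  -- the set of α whose V α meets D is countable
  set B : Set Ordinal := ⋃ k : ℕ, {α : Ordinal | α < κ.ord ∧ f k ∈ V α} with hB
  have hBc : B.Countable := Set.countable_iUnion fun k => (hfin k).countable
  have hIio : ¬ (Set.Iio κ.ord).Countable := by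
    intro hc
    have hc' := hc.le_aleph0
    rw [Ordinal.mk_Iio_ordinal, Cardinal.card_ord] at hc'
    have : κ ≤ Cardinal.aleph0 :=
      Cardinal.lift_le.1 (by rw [Cardinal.lift_aleph0]; exact hc')
    exact absurd ((hκ.trans this)) (not_le.2 (Cardinal.aleph0_lt_aleph_one))
  have : ¬ Set.Iio κ.ord ⊆ B := fun hsub => hIio (hBc.mono hsub)
  obtain ⟨α, hαlt, hαB⟩ := Set.not_subset.1 this
  rw [mem_closure_iff_nhds]
  push_neg
  refine ⟨V α, hV1 α hαlt, ?_⟩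
  rw [Set.eq_empty_iff_forall_notMem]
  rintro x ⟨hxV, k, rfl⟩
  exact hαB (Set.mem_iUnion.2 ⟨k, hαlt, hxV⟩)
end

section
/- Let (V^k : k ∈ ω) be a decreasing sequence of subsets of ω with V^{k+1} ⊆ V^k, let ν be fixed, and let {A_k(ν,η) : k ∈ ω, η < 2^ω} be sets of naturals satisfying (a) A_k(ν,η) ⊆ A_n(ν,η) for k ≤ n, and (b) for every finite set σ of ordinals η < 2^ω with |σ| = k and every m < k, the set ⋂_{η ∈ σ} A_m(ν,η) is finite. Define W^η = (⋂_k V^k) ∪ ⋃_{1 ≤ k < ω} (A_k(ν,η) ∩ (V^k \ V^{k+1})). Then for every k ≥ 1 and all η₁ < η₂ < ... < η_k < 2^ω, the set ⋂_{i=1}^{k} W^{η_i} \ V^k is finite. -/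
/-- Kunen's key combinatorial computation: given a decreasing sequence `(V k : k < ω)` of
subsets of `ω` and sets `A k η` (for `k < ω`, `η < 2^ω`, with the index `ν` fixed) which are
increasing in `k` and such that for every finite set `σ` of ordinals `η < 2^ω` and every
`m < |σ|` the set `⋂_{η ∈ σ} A m η` is finite, the sets
`W η = (⋂ k, V k) ∪ ⋃_{1 ≤ k} (A k η ∩ (V k \ V (k+1)))`
satisfy: for all `k ≥ 1` and all `η₁ < ... < η_k < 2^ω`, `(⋂ i, W ηᵢ) \ V k` is finite. -/
theorem stmt3 (V : ℕ → Set ℕ) (hV : ∀ k, V (k + 1) ⊆ V k)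
    (A : ℕ → Ordinal.{0} → Set ℕ)
    (hmono : ∀ k n η, k ≤ n → A k η ⊆ A n η)
    (hlink : ∀ σ : Finset Ordinal.{0}, (∀ η ∈ σ, η < Cardinal.continuum.ord) →
      ∀ m < σ.card, (⋂ η ∈ σ, A m η).Finite)
    (W : Ordinal.{0} → Set ℕ)
    (hW : ∀ η, W η = (⋂ k, V k) ∪ ⋃ k, ⋃ (_ : 1 ≤ k), (A k η ∩ (V k \ V (k + 1)))) :
    ∀ k : ℕ, 1 ≤ k → ∀ s : Fin k → Ordinal.{0}, StrictMono s →
      (∀ i, s i < Cardinal.continuum.ord) →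
      ((⋂ i, W (s i)) \ V k).Finite := by
  intro k hk s hs hlt
  have hVanti : ∀ a b : ℕ, a ≤ b → V b ⊆ V a := by
    intro a b hab
    induction b with
    | zero => simpa using (Nat.le_zero.mp hab) ▸ subset_rfl
    | succ n ih =>
      rcases Nat.lt_or_ge a (n + 1) with h | h
      · exact (hV n).trans (ih (Nat.lt_succ_iff.mp h))
      · have : a = n + 1 := le_antisymm hab h
        simp [this]
  set σ : Finset Ordinal.{0} := Finset.image s Finset.univ with hσ
  have hcard : σ.card = k := by
    rw [hσ, Finset.card_image_of_injective _ hs.injective, Finset.card_univ, Fintype.card_fin]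
  have hfin : (⋂ η ∈ σ, A (k - 1) η).Finite := by
    apply hlink σ
    · intro η hη
      rcases Finset.mem_image.mp hη with ⟨i, _, rfl⟩
      exact hlt i
    · rw [hcard]; omega
  refine hfin.subset ?_
  intro x hx
  rcases hx with ⟨hx1, hx2⟩
  simp only [Set.mem_iInter]
  rintro η hη
  rcases Finset.mem_image.mp hη with ⟨i, _, rfl⟩
  have hxW : x ∈ W (s i) := Set.mem_iInter.mp hx1 i
  rw [hW] at hxW
  rcases hxW with h | h
  · exact absurd (Set.mem_iInter.mp h k) hx2
  · simp only [Set.mem_iUnion] at h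
    rcases h with ⟨m, hm1, hxA, hxV, _⟩
    have hmk : m < k := by
      by_contra hc
      exact hx2 (hVanti k m (le_of_not_gt hc) hxV)
    exact hmono m (k - 1) (s i) (by omega) hxA
end
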